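/- Harnack's inequality: if u is a positive harmonic function on the open disc B(a, d) in ℝ², then for 0 ≤ r < 1 and any point z on the circle |z - a| = rd, u satisfies u(a)·(1-r)/(1+r) ≤ u(z) ≤ u(a)·(1+r)/(1-r). -/

import Mathlib

/-!
A positive harmonic function `u` on the disc is the real part of a holomorphic `f`. The Cayley
transform `(f - f a) / (f + conj (f a))` maps the disc into the unit disc and vanishes at the
centre, so by the Schwarz lemma `‖f z - f a‖ ≤ r ‖f z + conj (f a)‖`. Dropping the common
imaginary part leaves `|u z - u a| ≤ r (u z + u a)`, which is the pair of Harnack bounds.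
-/

/-- `u` is harmonic on the open set `V ⊆ ℂ`: it is `C²` and its Laplacian
(the sum of the second derivatives in the directions `1` and `i`) vanishes. -/
def IsHarmonicOn (u : ℂ → ℝ) (V : Set ℂ) : Prop :=
  ∀ z ∈ V, ContDiffAt ℝ 2 u z ∧
    iteratedFDeriv ℝ 2 u z ![1, 1] + iteratedFDeriv ℝ 2 u z ![Complex.I, Complex.I] = 0

open Complex Metric Set InnerProductSpace ComplexConjugate

theorem IsHarmonicOn.harmonicOnNhd {u : ℂ → ℝ} {V : Set ℂ} (hu : IsHarmonicOn u V)
    (hV : IsOpen V) : HarmonicOnNhd u V := fun z hz =>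
  ⟨(hu z hz).1, Filter.eventually_of_mem (hV.mem_nhds hz) fun w hw => by
    simpa [laplacian_eq_iteratedFDeriv_complexPlane] using (hu w hw).2⟩

theorem bounds_of_abs_sub_le_mul_abs_add {x c r : ℝ} (hc : 0 < c) (hr : r < 1)
    (h : |x - c| ≤ r * |x + c|) : c * (1 - r) / (1 + r) ≤ x ∧ x ≤ c * (1 + r) / (1 - r) := by
  have hxc : 0 < x + c := by
    by_contra! hneg
    rw [abs_of_nonpos hneg] at h
    nlinarith [neg_abs_le (x - c)]
  have hr0 : 0 ≤ r := nonneg_of_mul_nonneg_left ((abs_nonneg _).trans h) (abs_pos.2 hxc.ne')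
  rw [abs_of_pos hxc, abs_le] at h
  constructor
  · rw [div_le_iff₀ (by linarith)]
    linarith
  · rw [le_div_iff₀ (by linarith)]
    linarith

namespace Complex

theorem normSq_add_conj_sub_normSq_sub (w p : ℂ) :
    normSq (w + conj p) - normSq (w - p) = 4 * w.re * p.re := by
  simp only [normSq_apply, add_re, add_im, sub_re, sub_im, conj_re, conj_im]
  ring

theorem norm_sub_lt_norm_add_conj {w p : ℂ} (hw : 0 < w.re) (hp : 0 < p.re) :
    ‖w - p‖ < ‖w + conj p‖ := by
  rw [← sq_lt_sq₀ (norm_nonneg _) (norm_nonneg _), Complex.sq_norm, Complex.sq_norm]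
  nlinarith [normSq_add_conj_sub_normSq_sub w p, mul_pos hw hp]

theorem re_bounds_of_norm_sub_le_mul_norm_add_conj {w p : ℂ} {r : ℝ} (hp : 0 < p.re)
    (hr0 : 0 ≤ r) (hr1 : r < 1) (h : ‖w - p‖ ≤ r * ‖w + conj p‖) :
    p.re * (1 - r) / (1 + r) ≤ w.re ∧ w.re ≤ p.re * (1 + r) / (1 - r) := by
  have hsub : ‖w - p‖ ^ 2 = (w.re - p.re) ^ 2 + (w.im - p.im) ^ 2 := by
    rw [Complex.sq_norm, normSq_apply]
    simp only [sub_re, sub_im]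
    ring
  have hadd : ‖w + conj p‖ ^ 2 = (w.re + p.re) ^ 2 + (w.im - p.im) ^ 2 := by
    rw [Complex.sq_norm, normSq_apply]
    simp only [add_re, add_im, conj_re, conj_im]
    ring
  have hsq : ‖w - p‖ ^ 2 ≤ r ^ 2 * ‖w + conj p‖ ^ 2 := by
    rw [← mul_pow]
    exact pow_le_pow_left₀ (norm_nonneg _) h 2
  have hre : (w.re - p.re) ^ 2 ≤ (r * (w.re + p.re)) ^ 2 := by
    nlinarith [mul_nonneg (sq_nonneg (w.im - p.im)) (by nlinarith : (0 : ℝ) ≤ 1 - r ^ 2)]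
  refine bounds_of_abs_sub_le_mul_abs_add hp hr1 ?_
  rw [← abs_of_nonneg hr0, ← abs_mul]
  exact sq_le_sq.1 hre

theorem norm_sub_le_mul_norm_add_conj_of_re_pos {f : ℂ → ℂ} {a z : ℂ} {d : ℝ}
    (hf : DifferentiableOn ℂ f (ball a d)) (hpos : ∀ w ∈ ball a d, 0 < (f w).re)
    (hz : z ∈ ball a d) : ‖f z - f a‖ ≤ dist z a / d * ‖f z + conj (f a)‖ := by
  have ha : 0 < (f a).re := hpos a (mem_ball_self (pos_of_mem_ball hz))
  have hden : ∀ w ∈ ball a d, f w + conj (f a) ≠ 0 := fun w hw h0 => by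
    have := congrArg re h0
    simp only [add_re, conj_re, zero_re] at this
    linarith [hpos w hw]
  set g : ℂ → ℂ := fun w => (f w - f a) / (f w + conj (f a))
  have hg : DifferentiableOn ℂ g (ball a d) := (hf.sub_const _).div (hf.add_const _) hden
  have hga : g a = 0 := by simp [g]
  have hmaps : MapsTo g (ball a d) (closedBall (g a) 1) := fun w hw => by
    rw [hga, mem_closedBall_zero_iff, norm_div]
    exact div_le_one_of_le₀ (norm_sub_lt_norm_add_conj (hpos w hw) ha).le (norm_nonneg _)
  have hschwarz := dist_le_div_mul_dist_of_mapsTo_ball hg hmaps hz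
  rw [hga, dist_zero_right, norm_div, div_le_iff₀ (norm_pos_iff.2 (hden z hz))] at hschwarz
  simpa [div_eq_inv_mul] using hschwarz

theorem re_bounds_of_differentiableOn_of_re_pos {f : ℂ → ℂ} {a z : ℂ} {d : ℝ}
    (hf : DifferentiableOn ℂ f (ball a d)) (hpos : ∀ w ∈ ball a d, 0 < (f w).re)
    (hz : z ∈ ball a d) :
    (f a).re * (1 - dist z a / d) / (1 + dist z a / d) ≤ (f z).re ∧
      (f z).re ≤ (f a).re * (1 + dist z a / d) / (1 - dist z a / d) := by
  have hd : 0 < d := pos_of_mem_ball hz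
  refine re_bounds_of_norm_sub_le_mul_norm_add_conj (hpos a (mem_ball_self hd))
    (by positivity) ?_ (norm_sub_le_mul_norm_add_conj_of_re_pos hf hpos hz)
  rwa [div_lt_one hd, ← mem_ball]

end Complex

theorem harnack_inequality_disc_general
    (u : ℂ → ℝ) (a : ℂ) (d : ℝ) (hd : 0 < d)
    (hu : IsHarmonicOn u (Metric.ball a d))
    (hpos : ∀ z ∈ Metric.ball a d, 0 < u z)
    (r : ℝ) (hr1 : r < 1)
    (z : ℂ) (hz : dist z a = r * d) :
    u a * (1 - r) / (1 + r) ≤ u z ∧ u z ≤ u a * (1 + r) / (1 - r) := by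
  obtain ⟨f, hf, hf_re⟩ := (hu.harmonicOnNhd isOpen_ball).exists_analyticOnNhd_ball_re_eq
  have hre : ∀ w ∈ ball a d, (f w).re = u w := fun w hw => hf_re hw
  have hz_mem : z ∈ ball a d := by
    rw [mem_ball, hz]
    nlinarith
  have hr : dist z a / d = r := by
    rw [hz]
    field_simp
  have := re_bounds_of_differentiableOn_of_re_pos hf.differentiableOn
    (fun w hw => hre w hw ▸ hpos w hw) hz_mem
  rwa [hr, hre z hz_mem, hre a (mem_ball_self hd)] at this

/-- Harnack's inequality on a disc: if `u` is positive harmonic on `B(a,d)` and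
`|z - a| = r d` with `0 ≤ r < 1`, then
`u(a)(1-r)/(1+r) ≤ u(z) ≤ u(a)(1+r)/(1-r)`. -/
theorem harnack_inequality_disc
    (u : ℂ → ℝ) (a : ℂ) (d : ℝ) (hd : 0 < d)
    (hu : IsHarmonicOn u (Metric.ball a d))
    (hpos : ∀ z ∈ Metric.ball a d, 0 < u z)
    (r : ℝ) (hr0 : 0 ≤ r) (hr1 : r < 1)
    (z : ℂ) (hz : dist z a = r * d) :
    u a * (1 - r) / (1 + r) ≤ u z ∧ u z ≤ u a * (1 + r) / (1 - r) :=
  harnack_inequality_disc_general u a d hd hu hpos r hr1 z hz
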